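/- Let G be a stratified ground program with an EDB/IDB partition, let Q be an IDB query atom that is finitely recursive on G, let M be a stable model of G, and let M' = variant(Q,G,M). If N' ⊆ M' is a model of the reduct Magic(Q,G)^{M'}, then the interpretation M \ {a ∈ A : (left copy of) a ∈ M' and (left copy of) a ∉ N'} is a model of the reduct G^M. -/

import Mathlib

/-- A ground ASP rule over a type `A` of ground atoms: a finite nonempty head,
a finite positive body and a finite negative body. -/
structure GroundRule (A : Type) : Type where
  head : Set A
  pos : Set A
  neg : Set A
  head_fin : head.Finite
  pos_fin : pos.Finite
  neg_fin : neg.Finite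
  head_ne : head.Nonempty

/-- An interpretation `I` satisfies a ground rule. -/
def GroundRule.satisfiedBy {A : Type} (I : Set A) (r : GroundRule A) : Prop :=
  r.pos ⊆ I ∧ r.neg ∩ I = ∅ → (r.head ∩ I).Nonempty

/-- `I` is a model of the ground program `G`. -/
def isModel {A : Type} (I : Set A) (G : Set (GroundRule A)) : Prop :=
  ∀ r ∈ G, r.satisfiedBy I

/-- The rule obtained by deleting the negative body. -/
def GroundRule.reduce {A : Type} (r : GroundRule A) : GroundRule A :=
  ⟨r.head, r.pos, ∅, r.head_fin, r.pos_fin, Set.finite_empty, r.head_ne⟩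

/-- The reduct `G^I`. -/
def reduct {A : Type} (G : Set (GroundRule A)) (I : Set A) : Set (GroundRule A) :=
  {g | ∃ r ∈ G, r.neg ∩ I = ∅ ∧ g = r.reduce}

/-- `M` is a stable model of `G`: a ⊆-minimal model of the reduct `G^M`. -/
def isStableModel {A : Type} (G : Set (GroundRule A)) (M : Set A) : Prop :=
  isModel M (reduct G M) ∧ ∀ N ⊆ M, isModel N (reduct G M) → N = M

/-- Brave entailment: `Q` is in some stable model. -/
def braveEnt {A : Type} (G : Set (GroundRule A)) (Q : A) : Prop :=
  ∃ M, isStableModel G M ∧ Q ∈ M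

/-- Cautious entailment: `Q` is in every stable model. -/
def cautiousEnt {A : Type} (G : Set (GroundRule A)) (Q : A) : Prop :=
  ∀ M, isStableModel G M → Q ∈ M

/-- `X` is an unfounded set for `G` w.r.t. `I`. -/
def isUnfounded {A : Type} (G : Set (GroundRule A)) (I X : Set A) : Prop :=
  ∀ r ∈ G, (r.head ∩ X).Nonempty →
    ¬ r.pos ⊆ I ∨ (r.neg ∩ I).Nonempty ∨ (r.pos ∩ X).Nonempty ∨
      (r.head ∩ (I \ X)).Nonempty

/-- `G` is stratified: it admits a level mapping. -/
def isStratified {A : Type} (G : Set (GroundRule A)) : Prop :=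
  ∃ lv : A → ℕ, ∀ r ∈ G, ∀ h ∈ r.head,
    (∀ b ∈ r.pos, lv b ≤ lv h) ∧ (∀ b ∈ r.neg, lv b < lv h)

/-- The set `R(Q,G)` of atoms relevant for `Q` in `G` (the least set containing `Q`
and closed under rules whose head intersects it). -/
def relevantFor {A : Type} (G : Set (GroundRule A)) (Q : A) : Set A :=
  ⋂₀ {R : Set A | Q ∈ R ∧ ∀ r ∈ G, (r.head ∩ R).Nonempty → r.head ∪ r.pos ∪ r.neg ⊆ R}

/-- `Q` is finitely recursive on `G`. -/
def finitelyRecursive {A : Type} (G : Set (GroundRule A)) (Q : A) : Prop :=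
  (relevantFor G Q).Finite

/-- A fact: a singleton head and empty bodies. -/
def GroundRule.isFact {A : Type} (r : GroundRule A) : Prop :=
  (∃ a, r.head = {a}) ∧ r.pos = ∅ ∧ r.neg = ∅

/-- The fact with head `{a}`. -/
def factRule {A : Type} (a : A) : GroundRule A :=
  ⟨{a}, ∅, ∅, Set.finite_singleton a, Set.finite_empty, Set.finite_empty,
    Set.singleton_nonempty a⟩

/-- An EDB/IDB partition of a ground program: `idb` and `edb` are disjoint and
every rule of `edb` is a fact. -/
def isPartition {A : Type} (idb edb : Set (GroundRule A)) : Prop :=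
  Disjoint idb edb ∧ ∀ r ∈ edb, r.isFact

/-- `a` is an IDB atom: it occurs in the head of some IDB rule. -/
def isIDBAtom {A : Type} (idb : Set (GroundRule A)) (a : A) : Prop :=
  ∃ r ∈ idb, a ∈ r.head
/-- The magic rule `m(q) :- m(p)` (magic atoms live in the right copy of `A ⊕ A`). -/
def magicRule {A : Type} (q p : A) : GroundRule (A ⊕ A) :=
  ⟨{Sum.inr q}, {Sum.inr p}, ∅, Set.finite_singleton _, Set.finite_singleton _,
    Set.finite_empty, Set.singleton_nonempty _⟩

/-- The modified rule obtained from `r`: the head (left copies), the positive body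
augmented with the magic atoms of all head atoms, and the negative body. -/
def modifiedRule {A : Type} (r : GroundRule A) : GroundRule (A ⊕ A) :=
  ⟨Sum.inl '' r.head, Sum.inl '' r.pos ∪ Sum.inr '' r.head, Sum.inl '' r.neg,
    r.head_fin.image _, (r.pos_fin.image _).union (r.head_fin.image _),
    r.neg_fin.image _, r.head_ne.image _⟩

/-- Renaming the atoms of a rule along a function. -/
def GroundRule.map {A B : Type} (f : A → B) (r : GroundRule A) : GroundRule B :=
  ⟨f '' r.head, f '' r.pos, f '' r.neg, r.head_fin.image _, r.pos_fin.image _,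
    r.neg_fin.image _, r.head_ne.image _⟩

/-- The magic subprogram: the seed fact `m(Q).` together with all magic rules. -/
def magicSub {A : Type} (idb : Set (GroundRule A)) (Q : A) : Set (GroundRule (A ⊕ A)) :=
  {factRule (Sum.inr Q)} ∪
    {g | ∃ r ∈ idb, ∃ p ∈ r.head, ∃ q ∈ (r.head ∪ r.pos ∪ r.neg) \ {p},
      isIDBAtom idb q ∧ g = magicRule q p}

/-- The magic transform `Magic(Q,G)` of the program `G = idb ∪ edb`:
the seed fact, the magic rules, the modified rules and the EDB facts. -/
def magicProg {A : Type} (idb edb : Set (GroundRule A)) (Q : A) :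
    Set (GroundRule (A ⊕ A)) :=
  magicSub idb Q ∪ {g | ∃ r ∈ idb, g = modifiedRule r} ∪ GroundRule.map Sum.inl '' edb

/-- The least model of a program (the intersection of all its models);
for a definite program this is its least model. -/
def leastModel {A : Type} (G : Set (GroundRule A)) : Set A :=
  ⋂₀ {I | isModel I G}

/-- `M*`: the least model of the magic subprogram. -/
def Mstar {A : Type} (idb : Set (GroundRule A)) (Q : A) : Set (A ⊕ A) :=
  leastModel (magicSub idb Q)

/-- The killed atoms w.r.t. `N`: atoms (of the left copy) that are false in `N` and
are EDB atoms or whose magic atom is true in `N`. -/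
def killed {A : Type} (idb : Set (GroundRule A)) (N : Set (A ⊕ A)) : Set A :=
  {a | Sum.inl a ∉ N ∧ (¬ isIDBAtom idb a ∨ Sum.inr a ∈ N)}

/-- The magic variant of an interpretation `I`: the heads of the EDB facts,
`M*`, and the left copies of the atoms of `I` whose magic atom is in `M*`. -/
def magicVariant {A : Type} (idb edb : Set (GroundRule A)) (Q : A) (I : Set A) :
    Set (A ⊕ A) :=
  (⋃ r ∈ edb, Sum.inl '' r.head) ∪ Mstar idb Q ∪
    {x | ∃ a ∈ I, Sum.inr a ∈ Mstar idb Q ∧ x = Sum.inl a}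

/-!
Let `K` be the set of removed atoms and take a rule `r` of `G^M` whose positive body lies in
`M \ K`. Since `M` is a model of `G^M`, some head atom `h` of `r` is in `M`; as the EDB facts
are copied into the magic program, `h` is removed only if `r` is an IDB rule and `m(h) ∈ M*`.
In that case the modified rule of `r` fires in `N'`: its magic body atoms are reached from
`m(h)` by magic rules, so they lie in `M* ⊆ N'`; each positive body atom `a` lies in `M`, hence
(by minimality of `M`) heads some rule of `G`, so `a` is an EDB atom or `m(a) ∈ M*`, which puts
`a` in `M'` and, as `a ∉ K`, in `N'`; and the negative body misses `M'`, whose left part is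
contained in `M`. The head atom that `N'` then contains is in `M \ K`.
-/

section Semantics

variable {A : Type}

lemma isModel_reduct_iff {I J : Set A} {G : Set (GroundRule A)} :
    isModel I (reduct G J) ↔
      ∀ r ∈ G, r.neg ∩ J = ∅ → r.pos ⊆ I → (r.head ∩ I).Nonempty := by
  constructor
  · intro h r hr hn hp
    exact h r.reduce ⟨r, hr, hn, rfl⟩ ⟨hp, Set.empty_inter I⟩
  · rintro h _ ⟨r, hr, hn, rfl⟩ ⟨hp, -⟩
    exact h r hr hn hp

lemma GroundRule.isFact.map {B : Type} (f : A → B) {r : GroundRule A} (h : r.isFact) :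
    (r.map f).isFact := by
  obtain ⟨⟨a, ha⟩, hp, hn⟩ := h
  exact ⟨⟨f a, by simp [GroundRule.map, ha]⟩, by simp [GroundRule.map, hp],
    by simp [GroundRule.map, hn]⟩

lemma mem_of_isModel_reduct_of_isFact {I J : Set A} {G : Set (GroundRule A)}
    (hI : isModel I (reduct G J)) {r : GroundRule A} (hr : r ∈ G) (hf : r.isFact) {a : A}
    (ha : a ∈ r.head) : a ∈ I := by
  obtain ⟨⟨b, hb⟩, hp, hn⟩ := hf
  obtain ⟨c, hc, hcI⟩ := isModel_reduct_iff.1 hI r hr (by simp [hn]) (by simp [hp])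
  rw [hb, Set.mem_singleton_iff] at ha hc
  rwa [ha, ← hc]

lemma isStableModel.exists_mem_head {G : Set (GroundRule A)} {M : Set A}
    (hM : isStableModel G M) {a : A} (ha : a ∈ M) : ∃ r ∈ G, a ∈ r.head := by
  set S := {a ∈ M | ∃ r ∈ G, a ∈ r.head}
  have hS : isModel S (reduct G M) := by
    rw [isModel_reduct_iff]
    intro r hr hn hp
    obtain ⟨h, hh, hhM⟩ := isModel_reduct_iff.1 hM.1 r hr hn (hp.trans (Set.sep_subset _ _))
    exact ⟨h, hh, hhM, r, hr, hh⟩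
  rw [← hM.2 S (Set.sep_subset _ _) hS] at ha
  exact ha.2

lemma leastModel_subset {G : Set (GroundRule A)} {I : Set A} (h : isModel I G) :
    leastModel G ⊆ I :=
  Set.sInter_subset_of_mem h

lemma mem_leastModel_of_mem_head {G : Set (GroundRule A)} {r : GroundRule A} (hr : r ∈ G)
    (hn : r.neg = ∅) {a : A} (hh : r.head = {a}) (hp : r.pos ⊆ leastModel G) :
    a ∈ leastModel G := by
  refine Set.mem_sInter.2 fun I hI => ?_
  obtain ⟨b, hb, hbI⟩ := hI r hr ⟨hp.trans (leastModel_subset hI), by simp [hn]⟩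
  rw [hh, Set.mem_singleton_iff] at hb
  rwa [← hb]

end Semantics

section Magic

variable {A : Type} {idb edb : Set (GroundRule A)} {Q : A}

lemma neg_eq_empty_of_mem_magicSub {g : GroundRule (A ⊕ A)} (hg : g ∈ magicSub idb Q) :
    g.neg = ∅ := by
  rcases hg with rfl | ⟨r, -, p, -, q, -, -, rfl⟩ <;> rfl

lemma head_subset_range_inr_of_mem_magicSub {g : GroundRule (A ⊕ A)}
    (hg : g ∈ magicSub idb Q) : g.head ⊆ Set.range Sum.inr := by
  rcases hg with rfl | ⟨r, -, p, -, q, -, -, rfl⟩ <;> simp [factRule, magicRule]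

lemma Mstar_subset_range_inr : Mstar idb Q ⊆ Set.range Sum.inr :=
  leastModel_subset fun g hg _ =>
    (Set.inter_eq_left.2 (head_subset_range_inr_of_mem_magicSub hg)).symm ▸ g.head_ne

lemma inl_notMem_Mstar (a : A) : Sum.inl a ∉ Mstar idb Q := fun h => by
  obtain ⟨b, hb⟩ := Mstar_subset_range_inr h
  exact Sum.inr_ne_inl hb

lemma inr_mem_Mstar_of_mem_head {r : GroundRule A} (hr : r ∈ idb) {p q : A}
    (hp : p ∈ r.head) (hmp : Sum.inr p ∈ Mstar idb Q) (hq : q ∈ r.head ∪ r.pos ∪ r.neg)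
    (hqI : isIDBAtom idb q) : Sum.inr q ∈ Mstar idb Q := by
  by_cases hqp : q = p
  · exact hqp ▸ hmp
  · exact mem_leastModel_of_mem_head (Or.inr ⟨r, hr, p, hp, q, ⟨hq, hqp⟩, hqI, rfl⟩) rfl rfl
      (Set.singleton_subset_iff.2 hmp)

lemma Mstar_subset_of_isModel_reduct_magicProg {N J : Set (A ⊕ A)}
    (hN : isModel N (reduct (magicProg idb edb Q) J)) : Mstar idb Q ⊆ N :=
  leastModel_subset fun g hg ⟨hp, _⟩ =>
    isModel_reduct_iff.1 hN g (Or.inl (Or.inl hg)) (by simp [neg_eq_empty_of_mem_magicSub hg]) hp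

lemma inl_mem_of_isModel_reduct_magicProg_of_mem_edb (hpart : isPartition idb edb)
    {N J : Set (A ⊕ A)} (hN : isModel N (reduct (magicProg idb edb Q) J))
    {r : GroundRule A} (hr : r ∈ edb) {a : A} (ha : a ∈ r.head) : Sum.inl a ∈ N :=
  mem_of_isModel_reduct_of_isFact hN (Or.inr ⟨r, hr, rfl⟩) ((hpart.2 r hr).map _) ⟨a, ha, rfl⟩

lemma exists_inl_mem_of_isModel_reduct_magicProg {N J : Set (A ⊕ A)}
    (hN : isModel N (reduct (magicProg idb edb Q) J)) {r : GroundRule A} (hr : r ∈ idb)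
    (hneg : Sum.inl '' r.neg ∩ J = ∅) (hpos : Sum.inl '' r.pos ⊆ N)
    (hhead : Sum.inr '' r.head ⊆ N) : ∃ p ∈ r.head, Sum.inl p ∈ N := by
  obtain ⟨_, ⟨p, hp, rfl⟩, hpN⟩ := isModel_reduct_iff.1 hN (modifiedRule r)
    (Or.inl (Or.inr ⟨r, hr, rfl⟩)) hneg (Set.union_subset hpos hhead)
  exact ⟨p, hp, hpN⟩

lemma inl_mem_magicVariant_iff {I : Set A} {a : A} :
    Sum.inl a ∈ magicVariant idb edb Q I ↔
      (∃ r ∈ edb, a ∈ r.head) ∨ (a ∈ I ∧ Sum.inr a ∈ Mstar idb Q) := by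
  simp [magicVariant, inl_notMem_Mstar]

lemma mem_of_inl_mem_magicVariant {I : Set A} (hedb : ∀ r ∈ edb, r.head ⊆ I) {a : A}
    (ha : Sum.inl a ∈ magicVariant idb edb Q I) : a ∈ I := by
  rcases inl_mem_magicVariant_iff.1 ha with ⟨r, hr, har⟩ | ⟨haI, -⟩
  exacts [hedb r hr har, haI]

lemma inl_mem_magicVariant_of_mem_pos {M : Set A} (hM : isStableModel (idb ∪ edb) M)
    {r : GroundRule A} (hr : r ∈ idb) {h a : A} (hh : h ∈ r.head)
    (hmh : Sum.inr h ∈ Mstar idb Q) (ha : a ∈ r.pos) (haM : a ∈ M) :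
    Sum.inl a ∈ magicVariant idb edb Q M := by
  rw [inl_mem_magicVariant_iff]
  obtain ⟨s, hs | hs, has⟩ := hM.exists_mem_head haM
  · exact Or.inr ⟨haM, inr_mem_Mstar_of_mem_head hr hh hmh (Or.inl (Or.inr ha)) ⟨s, hs, has⟩⟩
  · exact Or.inl ⟨s, hs, has⟩

end Magic

theorem magicVariant_submodel_general {A : Type} (idb edb : Set (GroundRule A)) (Q : A)
    (hpart : isPartition idb edb)
    (M : Set A) (hM : isStableModel (idb ∪ edb) M)
    (N' : Set (A ⊕ A)) (hsub : N' ⊆ magicVariant idb edb Q M)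
    (hN' : isModel N' (reduct (magicProg idb edb Q) (magicVariant idb edb Q M))) :
    isModel (M \ {a | Sum.inl a ∈ magicVariant idb edb Q M ∧ Sum.inl a ∉ N'})
      (reduct (idb ∪ edb) M) := by
  have hedbM : ∀ r ∈ edb, r.head ⊆ M := fun r hr _ ha =>
    mem_of_isModel_reduct_of_isFact hM.1 (Or.inr hr) (hpart.2 r hr) ha
  have hedbN : ∀ r ∈ edb, ∀ a ∈ r.head, Sum.inl a ∈ N' := fun _ hr _ ha =>
    inl_mem_of_isModel_reduct_magicProg_of_mem_edb hpart hN' hr ha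
  rw [isModel_reduct_iff]
  intro r hr hneg hpos
  obtain ⟨h, hh, hhM⟩ := isModel_reduct_iff.1 hM.1 r hr hneg (hpos.trans Set.sdiff_subset)
  by_cases hkept : Sum.inl h ∈ magicVariant idb edb Q M → Sum.inl h ∈ N'
  · exact ⟨h, hh, hhM, fun hk => hk.2 (hkept hk.1)⟩
  obtain ⟨hhM', hhN⟩ := Classical.not_imp.1 hkept
  obtain hr | hr := hr
  swap; · exact absurd (hedbN r hr h hh) hhN
  obtain ⟨s, hs, hhs⟩ | ⟨-, hmh⟩ := inl_mem_magicVariant_iff.1 hhM'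
  · exact absurd (hedbN s hs h hhs) hhN
  have hnegN : Sum.inl '' r.neg ∩ magicVariant idb edb Q M = ∅ := by
    refine Set.eq_empty_of_forall_notMem ?_
    rintro _ ⟨⟨a, ha, rfl⟩, haM'⟩
    exact hneg.subset ⟨ha, mem_of_inl_mem_magicVariant hedbM haM'⟩
  have hposN : Sum.inl '' r.pos ⊆ N' := by
    rintro _ ⟨a, ha, rfl⟩
    by_contra haN
    exact (hpos ha).2 ⟨inl_mem_magicVariant_of_mem_pos hM hr hh hmh ha (hpos ha).1, haN⟩
  have hheadN : Sum.inr '' r.head ⊆ N' := by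
    rintro _ ⟨p, hp, rfl⟩
    exact Mstar_subset_of_isModel_reduct_magicProg hN'
      (inr_mem_Mstar_of_mem_head hr hh hmh (Or.inl (Or.inl hp)) ⟨r, hr, hp⟩)
  obtain ⟨p, hp, hpN⟩ := exists_inl_mem_of_isModel_reduct_magicProg hN' hr hnegN hposN hheadN
  exact ⟨p, hp, mem_of_inl_mem_magicVariant hedbM (hsub hpN), fun hk => hk.2 hpN⟩

/-- If `M` is a stable model of `G = idb ∪ edb`, `M' = variant(Q,G,M)`, and
`N' ⊆ M'` is a model of the reduct `Magic(Q,G)^{M'}`, then removing from `M` the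
(left-copy) atoms in `M' \ N'` yields a model of the reduct `G^M`. -/
theorem magicVariant_submodel {A : Type} (idb edb : Set (GroundRule A)) (Q : A)
    (hpart : isPartition idb edb) (hstrat : isStratified (idb ∪ edb))
    (hQ : isIDBAtom idb Q) (hfr : finitelyRecursive (idb ∪ edb) Q)
    (M : Set A) (hM : isStableModel (idb ∪ edb) M)
    (N' : Set (A ⊕ A)) (hsub : N' ⊆ magicVariant idb edb Q M)
    (hN' : isModel N' (reduct (magicProg idb edb Q) (magicVariant idb edb Q M))) :
    isModel (M \ {a | Sum.inl a ∈ magicVariant idb edb Q M ∧ Sum.inl a ∉ N'})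
      (reduct (idb ∪ edb) M) :=
  magicVariant_submodel_general idb edb Q hpart M hM N' hsub hN'
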